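/- arXiv:2307.12141 — 3 statements merged into one kernel-verified Lean document; each statement's English description precedes it below -/
import Mathlib

section
/- Let E be a finite-dimensional Euclidean space, p a polynomial on E, and R the linear span of all translates p_a(x) = p(x+a), a ∈ E. If (p_i)_{i∈I} is an orthonormal basis of R for the Fischer inner product and p̆_i = ∂(p_i)p, then for all x, y ∈ E: p(x+y) = Σ_{i∈I} p_i(x) p̆_i(y). -/
set_option autoImplicit false

open MvPolynomial Classical

/-- The monomial differential operator `∂^d = ∏_i ∂_i^{d_i}` on polynomials on `ℝⁿ`. -/
noncomputable def monOp {n : ℕ} (d : Fin n →₀ ℕ) (q : MvPolynomial (Fin n) ℝ) :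
    MvPolynomial (Fin n) ℝ :=
  (Finset.univ : Finset (Fin n)).toList.foldr (fun i r => (⇑(pderiv i))^[d i] r) q

/-- The constant-coefficient differential operator `∂(p)` associated to a polynomial `p`. -/
noncomputable def diffOp {n : ℕ} (p q : MvPolynomial (Fin n) ℝ) : MvPolynomial (Fin n) ℝ :=
  (AddMonoidAlgebra.coeff p).sum fun d c => c • monOp d q

/-- The Fischer inner product `(p,q)_F = (∂(p)q)(0)`. -/
noncomputable def fischer {n : ℕ} (p q : MvPolynomial (Fin n) ℝ) : ℝ :=
  constantCoeff (diffOp p q)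

/-- The translate `p_a(x) = p(x + a)` of a polynomial. -/
noncomputable def polyTranslate {n : ℕ} (p : MvPolynomial (Fin n) ℝ) (a : Fin n → ℝ) :
    MvPolynomial (Fin n) ℝ :=
  aeval (fun i => X i + C (a i)) p

/-- The linear span `R` of all translates of `p`. -/
noncomputable def translateSpan {n : ℕ} (p : MvPolynomial (Fin n) ℝ) :
    Submodule ℝ (MvPolynomial (Fin n) ℝ) :=
  Submodule.span ℝ (Set.range (polyTranslate p))

/-!
Every partial derivative commutes with translation, hence so does every constant-coefficient
operator: `∂(q)(p_y) = (∂(q)p)_y`, and taking constant terms gives `(q, p_y)_F = (∂(q)p)(y)`.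
The translate `p_y` lies in `R`, so it is `∑ᵢ cᵢ pᵢ` with `cᵢ = (pᵢ, p_y)_F = p̆ᵢ(y)` by
orthonormality; evaluating this expansion at `x` gives `p(x + y) = ∑ᵢ pᵢ(x) p̆ᵢ(y)`.
-/

section

variable {n : ℕ}

theorem eval_polyTranslate (q : MvPolynomial (Fin n) ℝ) (x y : Fin n → ℝ) :
    eval x (polyTranslate q y) = eval (x + y) q := by
  rw [polyTranslate, aeval_eq_bind₁, eval, eval₂Hom_bind₁]
  simp only [coe_eval₂Hom, eval₂_X, eval₂_add, eval₂_C, RingHom.id_apply]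
  rfl

theorem constantCoeff_polyTranslate (q : MvPolynomial (Fin n) ℝ) (y : Fin n → ℝ) :
    constantCoeff (polyTranslate q y) = eval y q := by
  rw [← eval_zero, eval_polyTranslate, zero_add]

noncomputable def monOpEnd (d : Fin n →₀ ℕ) : Module.End ℝ (MvPolynomial (Fin n) ℝ) :=
  (Finset.univ : Finset (Fin n)).toList.foldr (fun i f => (pderiv i).toLinearMap ^ d i * f) 1

theorem coe_monOpEnd (d : Fin n →₀ ℕ) : ⇑(monOpEnd d) = monOp d := by
  funext q
  simp only [monOpEnd, monOp]
  induction (Finset.univ : Finset (Fin n)).toList with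
  | nil => rfl
  | cons i l ih => simp [ih, Module.End.pow_apply]

noncomputable def diffOpEnd (p : MvPolynomial (Fin n) ℝ) : Module.End ℝ (MvPolynomial (Fin n) ℝ) :=
  (AddMonoidAlgebra.coeff p).sum fun d c => c • monOpEnd d

theorem coe_diffOpEnd (p : MvPolynomial (Fin n) ℝ) : ⇑(diffOpEnd p) = diffOp p := by
  funext q
  simp [diffOpEnd, diffOp, LinearMap.finsupp_sum_apply, coe_monOpEnd]

theorem commute_monOpEnd {T : Module.End ℝ (MvPolynomial (Fin n) ℝ)}
    (hT : ∀ i, Commute (pderiv i).toLinearMap T) (d : Fin n →₀ ℕ) : Commute (monOpEnd d) T := by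
  unfold monOpEnd
  induction (Finset.univ : Finset (Fin n)).toList with
  | nil => exact Commute.one_left T
  | cons i l ih => exact ((hT i).pow_left _).mul_left ih

theorem commute_diffOpEnd {T : Module.End ℝ (MvPolynomial (Fin n) ℝ)}
    (hT : ∀ i, Commute (pderiv i).toLinearMap T) (p : MvPolynomial (Fin n) ℝ) :
    Commute (diffOpEnd p) T :=
  Commute.sum_left _ _ _ fun d _ => (commute_monOpEnd hT d).smul_left _

theorem commute_pderiv_polyTranslate (i : Fin n) (y : Fin n → ℝ) :
    Commute (pderiv i).toLinearMap (aeval fun j => X j + C (y j)).toLinearMap := by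
  refine LinearMap.ext fun p => ?_
  change pderiv i (polyTranslate p y) = polyTranslate (pderiv i p) y
  induction p using MvPolynomial.induction_on with
  | C a => simp [polyTranslate]
  | add p q hp hq => simp only [polyTranslate, map_add] at hp hq ⊢; rw [hp, hq]
  | mul_X p j hp =>
      simp only [polyTranslate, map_mul, aeval_X, Derivation.leibniz, pderiv_X] at hp ⊢
      rw [hp]
      rcases eq_or_ne i j with rfl | h
      · simp
      · simp [Pi.single_eq_of_ne' h]

theorem diffOp_polyTranslate (p q : MvPolynomial (Fin n) ℝ) (y : Fin n → ℝ) :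
    diffOp p (polyTranslate q y) = polyTranslate (diffOp p q) y := by
  rw [← coe_diffOpEnd]
  exact LinearMap.congr_fun (commute_diffOpEnd (commute_pderiv_polyTranslate · y) p) q

theorem fischer_polyTranslate (p q : MvPolynomial (Fin n) ℝ) (y : Fin n → ℝ) :
    fischer p (polyTranslate q y) = eval y (diffOp p q) := by
  rw [fischer, diffOp_polyTranslate, constantCoeff_polyTranslate]

theorem fischer_sum_smul_of_orthonormal {ι : Type*} [Fintype ι] [DecidableEq ι]
    {v : ι → MvPolynomial (Fin n) ℝ} (hv : ∀ i j, fischer (v i) (v j) = if i = j then 1 else 0)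
    (c : ι → ℝ) (i : ι) : fischer (v i) (∑ j, c j • v j) = c i := by
  have hlin : fischer (v i) (∑ j, c j • v j) = ∑ j, c j * fischer (v i) (v j) := by
    simp only [fischer, ← coe_diffOpEnd, map_sum, map_smul, constantCoeff_smul, smul_eq_mul]
  simp [hlin, hv]

end

theorem stmt_2_general {n : ℕ} (p : MvPolynomial (Fin n) ℝ) {ι : Type*} [Fintype ι]
    (pfam : ι → MvPolynomial (Fin n) ℝ)
    (hspan : translateSpan p ≤ Submodule.span ℝ (Set.range pfam))
    (hortho : ∀ i j, fischer (pfam i) (pfam j) = if i = j then 1 else 0)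
    (x y : Fin n → ℝ) :
    eval (x + y) p = ∑ i, eval x (pfam i) * eval y (diffOp (pfam i) p) := by
  obtain ⟨c, hc⟩ := (Submodule.mem_span_range_iff_exists_fun ℝ).mp
    (hspan (Submodule.subset_span ⟨y, rfl⟩))
  have hcoef : ∀ i, c i = eval y (diffOp (pfam i) p) := fun i => by
    rw [← fischer_polyTranslate, ← hc, fischer_sum_smul_of_orthonormal hortho]
  rw [← eval_polyTranslate, ← hc, map_sum]
  simp only [smul_eval, hcoef, mul_comm]

/-- generalized Taylor formula. If `(p_i)_{i∈I}` is an orthonormal basis of the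
span `R` of all translates of `p` for the Fischer inner product, and `p̆_i = ∂(p_i)p`, then
`p(x+y) = ∑_i p_i(x) p̆_i(y)` for all `x, y`. -/
theorem stmt_2 {n : ℕ} (p : MvPolynomial (Fin n) ℝ) {ι : Type*} [Fintype ι]
    (pfam : ι → MvPolynomial (Fin n) ℝ)
    (hmem : ∀ i, pfam i ∈ translateSpan p)
    (hspan : translateSpan p ≤ Submodule.span ℝ (Set.range pfam))
    (hortho : ∀ i j, fischer (pfam i) (pfam j) = if i = j then 1 else 0)
    (x y : Fin n → ℝ) :
    eval (x + y) p = ∑ i, eval x (pfam i) * eval y (diffOp (pfam i) p) :=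
  stmt_2_general p pfam hspan hortho x y
end

section
/- Let E be a finite-dimensional Euclidean space, p a polynomial on E, R the span of all translates of p, (p_i)_{i∈I} an orthonormal basis of R for the Fischer inner product, and p̆_i = ∂(p_i)p. Then for all smooth functions f, g on E: ∂(p)(fg) = Σ_{i∈I} ∂(p̆_i)f · ∂(p_i)g. -/
set_option autoImplicit false

open MvPolynomial Classical

/-- The `i`-th partial derivative of a function on `ℝⁿ`. -/
noncomputable def pdFun {n : ℕ} (i : Fin n) (f : (Fin n → ℝ) → ℝ) : (Fin n → ℝ) → ℝ :=
  fun x => fderiv ℝ f x (Pi.single i 1)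

/-- The monomial differential operator `∂^d` on smooth functions on `ℝⁿ`. -/
noncomputable def monOpFun {n : ℕ} (d : Fin n →₀ ℕ) (f : (Fin n → ℝ) → ℝ) :
    (Fin n → ℝ) → ℝ :=
  (Finset.univ : Finset (Fin n)).toList.foldr (fun i g => (pdFun i)^[d i] g) f

/-- The constant-coefficient differential operator `∂(p)` on smooth functions on `ℝⁿ`. -/
noncomputable def diffOpFun {n : ℕ} (p : MvPolynomial (Fin n) ℝ) (f : (Fin n → ℝ) → ℝ) :
    (Fin n → ℝ) → ℝ := fun x =>
  (AddMonoidAlgebra.coeff p).sum fun d c => c * monOpFun d f x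

namespace StmtAux
variable {n : ℕ}

lemma pderiv_iterate_add (i : Fin n) (k : ℕ) (q r : MvPolynomial (Fin n) ℝ) :
    (⇑(pderiv i))^[k] (q + r) = (⇑(pderiv i))^[k] q + (⇑(pderiv i))^[k] r := by
  induction k with
  | zero => rfl
  | succ k ih => simp [Function.iterate_succ_apply', ih]

lemma pderiv_iterate_smul (i : Fin n) (k : ℕ) (c : ℝ) (q : MvPolynomial (Fin n) ℝ) :
    (⇑(pderiv i))^[k] (c • q) = c • (⇑(pderiv i))^[k] q := by
  induction k with
  | zero => rfl
  | succ k ih => simp [Function.iterate_succ_apply', ih]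

lemma monOp_add (d : Fin n →₀ ℕ) (q r : MvPolynomial (Fin n) ℝ) :
    monOp d (q + r) = monOp d q + monOp d r := by
  unfold monOp
  induction (Finset.univ : Finset (Fin n)).toList with
  | nil => rfl
  | cons i t ih => simp only [List.foldr_cons, ih, pderiv_iterate_add]

lemma monOp_smul (d : Fin n →₀ ℕ) (c : ℝ) (q : MvPolynomial (Fin n) ℝ) :
    monOp d (c • q) = c • monOp d q := by
  unfold monOp
  induction (Finset.univ : Finset (Fin n)).toList with
  | nil => rfl
  | cons i t ih => simp only [List.foldr_cons, ih, pderiv_iterate_smul]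

lemma monOp_zero (d : Fin n →₀ ℕ) : monOp d (0 : MvPolynomial (Fin n) ℝ) = 0 := by
  have := monOp_smul d 0 0
  simpa using this

lemma pderiv_iterate_monomial (i : Fin n) (k : ℕ) (e : Fin n →₀ ℕ) (c : ℝ) :
    (⇑(pderiv i))^[k] (monomial e c)
      = monomial (e - Finsupp.single i k) (c * ((e i).descFactorial k : ℝ)) := by
  induction k with
  | zero => simp
  | succ k ih =>
    rw [Function.iterate_succ_apply', ih, pderiv_monomial]
    have h1 : (e - Finsupp.single i k) i = e i - k := by
      simp [Finsupp.tsub_apply]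
    have h2 : e - Finsupp.single i k - Finsupp.single i 1 = e - Finsupp.single i (k + 1) := by
      rw [tsub_tsub, ← Finsupp.single_add]
    rw [h1, h2, Nat.descFactorial_succ]
    congr 1
    push_cast
    ring

lemma sum_single_apply_eq_zero (d : Fin n →₀ ℕ) (l : List (Fin n)) (i : Fin n) (hi : i ∉ l) :
    (l.map fun j => Finsupp.single j (d j)).sum i = 0 := by
  induction l with
  | nil => rfl
  | cons a t ih =>
    simp only [List.map_cons, List.sum_cons, Finsupp.add_apply]
    rw [Finsupp.single_apply]
    have hia : ¬ a = i := fun h => hi (h ▸ List.mem_cons_self)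
    rw [if_neg hia, ih (fun h => hi (List.mem_cons_of_mem a h))]

lemma foldr_monomial (d e : Fin n →₀ ℕ) (c : ℝ) (l : List (Fin n)) (hl : l.Nodup) :
    l.foldr (fun i r => (⇑(pderiv i))^[d i] r) (monomial e c)
      = monomial (e - (l.map fun j => Finsupp.single j (d j)).sum)
          (c * (l.map fun j => ((e j).descFactorial (d j) : ℝ)).prod) := by
  induction l with
  | nil => simp
  | cons i t ih =>
    have hit : i ∉ t := (List.nodup_cons.mp hl).1
    have ht : t.Nodup := (List.nodup_cons.mp hl).2
    simp only [List.foldr_cons, ih ht, pderiv_iterate_monomial]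
    have happ : (e - (t.map fun j => Finsupp.single j (d j)).sum) i = e i := by
      rw [Finsupp.tsub_apply, sum_single_apply_eq_zero d t i hit, Nat.sub_zero]
    rw [happ]
    simp only [List.map_cons, List.sum_cons, List.prod_cons]
    rw [tsub_tsub, add_comm ((t.map fun j => Finsupp.single j (d j)).sum)]
    congr 1
    ring

lemma monOp_monomial (d e : Fin n →₀ ℕ) (c : ℝ) :
    monOp d (monomial e c) = monomial (e - d) (c * ∏ j, ((e j).descFactorial (d j) : ℝ)) := by
  unfold monOp
  rw [foldr_monomial d e c _ (Finset.nodup_toList _)]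
  rw [Finset.sum_map_toList, Finset.prod_map_toList]
  rw [Finsupp.univ_sum_single]

noncomputable def wfac (d : Fin n →₀ ℕ) : ℝ := ∏ j, ((d j).factorial : ℝ)

lemma wfac_pos (d : Fin n →₀ ℕ) : 0 < wfac d :=
  Finset.prod_pos fun j _ => by exact_mod_cast Nat.factorial_pos (d j)

lemma constantCoeff_monOp_monomial (d e : Fin n →₀ ℕ) (c : ℝ) :
    constantCoeff (monOp d (monomial e c)) = if e = d then c * wfac d else 0 := by
  rw [monOp_monomial, constantCoeff_monomial]
  by_cases h : e = d
  · subst h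
    rw [if_pos (tsub_eq_zero_iff_le.mpr le_rfl), if_pos rfl]
    unfold wfac
    congr 1
    exact Finset.prod_congr rfl fun j _ => by rw [Nat.descFactorial_self]
  · rw [if_neg h]
    by_cases hle : e - d = 0
    · rw [if_pos hle]
      have hled : e ≤ d := tsub_eq_zero_iff_le.mp hle
      have : ∃ j, e j < d j := by
        by_contra hc
        push_neg at hc
        exact h (le_antisymm hled (fun j => hc j))
      obtain ⟨j, hj⟩ := this
      have : ((e j).descFactorial (d j) : ℝ) = 0 := by
        exact_mod_cast congrArg (Nat.cast (R := ℝ))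
          (Nat.descFactorial_eq_zero_iff_lt.mpr hj)
      rw [Finset.prod_eq_zero (Finset.mem_univ j) this, mul_zero]
    · rw [if_neg hle]

lemma constantCoeff_monOp (d : Fin n →₀ ℕ) (q : MvPolynomial (Fin n) ℝ) :
    constantCoeff (monOp d q) = coeff d q * wfac d := by
  conv_lhs => rw [← support_sum_monomial_coeff q]
  have hsum : monOp d (∑ e ∈ q.support, monomial e (coeff e q))
      = ∑ e ∈ q.support, monOp d (monomial e (coeff e q)) := by
    classical
    induction q.support using Finset.induction with
    | empty => simpa using monOp_zero d
    | insert _ _ hx ih =>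
      rw [Finset.sum_insert hx, Finset.sum_insert hx, monOp_add, ih]
  rw [hsum, map_sum]
  by_cases hd : d ∈ q.support
  · rw [Finset.sum_eq_single d
      (fun e _ hne => by rw [constantCoeff_monOp_monomial, if_neg hne])
      (fun h => absurd hd h)]
    rw [constantCoeff_monOp_monomial, if_pos rfl]
  · have h0 : coeff d q = 0 := notMem_support_iff.mp hd
    rw [h0, zero_mul]
    apply Finset.sum_eq_zero
    intro e he
    rw [constantCoeff_monOp_monomial]
    exact if_neg fun h : e = d => hd (h ▸ he)

lemma fischer_eq_support_sum (p q : MvPolynomial (Fin n) ℝ) :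
    fischer p q = ∑ d ∈ p.support, coeff d p * coeff d q * wfac d := by
  unfold fischer diffOp
  rw [Finsupp.sum, map_sum]
  apply Finset.sum_congr rfl
  intro d hd
  rw [MvPolynomial.constantCoeff_smul, smul_eq_mul, constantCoeff_monOp]
  exact (mul_assoc (coeff d p) (coeff d q) (wfac d)).symm

lemma fischer_eq_sum (p q : MvPolynomial (Fin n) ℝ) (s : Finset (Fin n →₀ ℕ))
    (hs : p.support ⊆ s) :
    fischer p q = ∑ d ∈ s, coeff d p * coeff d q * wfac d := by
  rw [fischer_eq_support_sum]
  exact Finset.sum_subset hs fun d _ hd => by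
    rw [MvPolynomial.notMem_support_iff.mp hd, zero_mul, zero_mul]

lemma fischer_comm (p q : MvPolynomial (Fin n) ℝ) : fischer p q = fischer q p := by
  rw [fischer_eq_sum p q (p.support ∪ q.support) Finset.subset_union_left,
    fischer_eq_sum q p (p.support ∪ q.support) Finset.subset_union_right]
  exact Finset.sum_congr rfl fun d _ => by ring

lemma fischer_add_left (p q r : MvPolynomial (Fin n) ℝ) :
    fischer (p + q) r = fischer p r + fischer q r := by
  rw [fischer_eq_sum p r (p.support ∪ q.support) Finset.subset_union_left,
    fischer_eq_sum q r (p.support ∪ q.support) Finset.subset_union_right,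
    fischer_eq_sum (p + q) r (p.support ∪ q.support) (MvPolynomial.support_add),
    ← Finset.sum_add_distrib]
  exact Finset.sum_congr rfl fun d _ => by rw [MvPolynomial.coeff_add]; ring

lemma fischer_smul_left (c : ℝ) (p r : MvPolynomial (Fin n) ℝ) :
    fischer (c • p) r = c * fischer p r := by
  rw [fischer_eq_sum (c • p) r p.support MvPolynomial.support_smul,
    fischer_eq_support_sum, Finset.mul_sum]
  exact Finset.sum_congr rfl fun d _ => by
    rw [MvPolynomial.coeff_smul, smul_eq_mul]; ring

lemma fischer_zero_left (r : MvPolynomial (Fin n) ℝ) : fischer 0 r = 0 := by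
  have := fischer_smul_left 0 0 r
  simpa using this

lemma fischer_sum_left {α : Type*} (s : Finset α) (h : α → MvPolynomial (Fin n) ℝ)
    (r : MvPolynomial (Fin n) ℝ) :
    fischer (∑ a ∈ s, h a) r = ∑ a ∈ s, fischer (h a) r := by
  classical
  induction s using Finset.induction with
  | empty => simpa using fischer_zero_left r
  | insert _ _ hx ih => rw [Finset.sum_insert hx, Finset.sum_insert hx, fischer_add_left, ih]

lemma fischer_monomial_one_right (u : MvPolynomial (Fin n) ℝ) (e : Fin n →₀ ℕ) :
    fischer (monomial e 1) u = coeff e u * wfac e := by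
  rw [fischer_comm, fischer_eq_sum u (monomial e 1) (u.support ∪ {e})
    Finset.subset_union_left]
  rw [Finset.sum_eq_single e (fun d _ hne => by
      rw [MvPolynomial.coeff_monomial, if_neg (fun h => hne h.symm), mul_zero, zero_mul])
    (fun h => absurd (Finset.mem_union_right _ (Finset.mem_singleton_self e)) h)]
  rw [MvPolynomial.coeff_monomial, if_pos rfl, mul_one]
lemma diffOp_eq_sum (a p : MvPolynomial (Fin n) ℝ) (s : Finset (Fin n →₀ ℕ))
    (hs : a.support ⊆ s) :
    diffOp a p = ∑ d ∈ s, coeff d a • monOp d p := by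
  unfold diffOp
  rw [Finsupp.sum]
  exact Finset.sum_subset hs fun d _ hd => by
    rw [Finsupp.notMem_support_iff.mp hd, zero_smul]

lemma diffOp_add_left (a b p : MvPolynomial (Fin n) ℝ) :
    diffOp (a + b) p = diffOp a p + diffOp b p := by
  rw [diffOp_eq_sum a p (a.support ∪ b.support) Finset.subset_union_left,
    diffOp_eq_sum b p (a.support ∪ b.support) Finset.subset_union_right,
    diffOp_eq_sum (a + b) p (a.support ∪ b.support) MvPolynomial.support_add,
    ← Finset.sum_add_distrib]
  exact Finset.sum_congr rfl fun d _ => by rw [MvPolynomial.coeff_add, add_smul]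

lemma diffOp_smul_left (c : ℝ) (a p : MvPolynomial (Fin n) ℝ) :
    diffOp (c • a) p = c • diffOp a p := by
  rw [diffOp_eq_sum (c • a) p a.support MvPolynomial.support_smul,
    diffOp_eq_sum a p a.support subset_rfl, Finset.smul_sum]
  exact Finset.sum_congr rfl fun d _ => by rw [MvPolynomial.coeff_smul, smul_eq_mul, mul_smul]

lemma diffOp_zero_left (p : MvPolynomial (Fin n) ℝ) : diffOp 0 p = 0 := by
  unfold diffOp
  exact Finsupp.sum_zero_index

lemma diffOp_sum_left {α : Type*} (s : Finset α) (h : α → MvPolynomial (Fin n) ℝ)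
    (p : MvPolynomial (Fin n) ℝ) :
    diffOp (∑ a ∈ s, h a) p = ∑ a ∈ s, diffOp (h a) p := by
  classical
  induction s using Finset.induction with
  | empty => simpa using diffOp_zero_left p
  | insert _ _ hx ih => rw [Finset.sum_insert hx, Finset.sum_insert hx, diffOp_add_left, ih]

lemma diffOp_monomial_one (e : Fin n →₀ ℕ) (p : MvPolynomial (Fin n) ℝ) :
    diffOp (monomial e 1) p = monOp e p := by
  unfold diffOp
  rw [sum_monomial_eq (by rw [zero_smul])]
  rw [one_smul]

lemma pderiv_polyTranslate (i : Fin n) (q : MvPolynomial (Fin n) ℝ) (a : Fin n → ℝ) :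
    pderiv i (polyTranslate q a) = polyTranslate (pderiv i q) a := by
  unfold polyTranslate
  induction q using MvPolynomial.induction_on with
  | C c => simp only [aeval_C, algebraMap_eq, pderiv_C, map_zero]
  | add q r hq hr => simp only [map_add, hq, hr]
  | mul_X q j hq =>
    simp only [map_mul, pderiv_mul, map_add, hq, aeval_X, pderiv_X, Pi.single_apply,
      pderiv_C, add_zero, map_zero]
    split_ifs with h
    · simp only [map_one]
    · simp only [map_zero]

lemma monOp_polyTranslate (d : Fin n →₀ ℕ) (q : MvPolynomial (Fin n) ℝ) (a : Fin n → ℝ) :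
    monOp d (polyTranslate q a) = polyTranslate (monOp d q) a := by
  unfold monOp
  induction (Finset.univ : Finset (Fin n)).toList generalizing q with
  | nil => rfl
  | cons i t ih =>
    simp only [List.foldr_cons]
    rw [ih q]
    generalize (t.foldr (fun i r => (⇑(pderiv i))^[d i] r) q) = r
    induction d i with
    | zero => rfl
    | succ k ihk => rw [Function.iterate_succ_apply', Function.iterate_succ_apply', ihk,
        pderiv_polyTranslate]

lemma polyTranslate_smul (c : ℝ) (q : MvPolynomial (Fin n) ℝ) (a : Fin n → ℝ) :
    polyTranslate (c • q) a = c • polyTranslate q a := by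
  unfold polyTranslate
  exact map_smul _ _ _

lemma polyTranslate_sum {α : Type*} (s : Finset α) (h : α → MvPolynomial (Fin n) ℝ)
    (a : Fin n → ℝ) :
    polyTranslate (∑ x ∈ s, h x) a = ∑ x ∈ s, polyTranslate (h x) a := by
  unfold polyTranslate
  exact map_sum _ _ _

lemma diffOp_polyTranslate (q p : MvPolynomial (Fin n) ℝ) (a : Fin n → ℝ) :
    diffOp q (polyTranslate p a) = polyTranslate (diffOp q p) a := by
  rw [diffOp_eq_sum q (polyTranslate p a) q.support subset_rfl,
    diffOp_eq_sum q p q.support subset_rfl, polyTranslate_sum]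
  exact Finset.sum_congr rfl fun d _ => by
    rw [polyTranslate_smul, monOp_polyTranslate]

lemma constantCoeff_polyTranslate (r : MvPolynomial (Fin n) ℝ) (a : Fin n → ℝ) :
    constantCoeff (polyTranslate r a) = eval a r := by
  unfold polyTranslate
  induction r using MvPolynomial.induction_on with
  | C c => simp only [aeval_C, algebraMap_eq, constantCoeff_C, eval_C]
  | add q r hq hr => simp only [map_add, hq, hr]
  | mul_X q j hq =>
    simp only [map_mul, map_add, aeval_X, hq, constantCoeff_X, constantCoeff_C, eval_X,
      map_mul, zero_add]

lemma fischer_translate (q p : MvPolynomial (Fin n) ℝ) (a : Fin n → ℝ) :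
    fischer q (polyTranslate p a) = eval a (diffOp q p) := by
  unfold fischer
  rw [diffOp_polyTranslate, constantCoeff_polyTranslate]

lemma diffOp_eq_zero_of_orth (q p : MvPolynomial (Fin n) ℝ)
    (h : ∀ a : Fin n → ℝ, fischer q (polyTranslate p a) = 0) : diffOp q p = 0 := by
  apply MvPolynomial.funext
  intro a
  rw [map_zero, ← fischer_translate, h a]
abbrev Fn (n : ℕ) := (Fin n → ℝ) → ℝ

lemma smooth_pdFun {f : Fn n} (hf : ContDiff ℝ (⊤ : ℕ∞) f) (i : Fin n) :
    ContDiff ℝ (⊤ : ℕ∞) (pdFun i f) := by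
  have h1 : ContDiff ℝ (⊤ : ℕ∞) (fderiv ℝ f) := hf.fderiv_right (by simp)
  exact h1.clm_apply contDiff_const

lemma pdFun_add {f g : Fn n} (hf : Differentiable ℝ f) (hg : Differentiable ℝ g) (i : Fin n) :
    pdFun i (f + g) = pdFun i f + pdFun i g := by
  funext x
  show fderiv ℝ (f + g) x (Pi.single i 1) = _
  rw [fderiv_add (hf x) (hg x)]
  rfl

lemma pdFun_smul {f : Fn n} (hf : Differentiable ℝ f) (c : ℝ) (i : Fin n) :
    pdFun i (c • f) = c • pdFun i f := by
  funext x
  show fderiv ℝ (fun y => c • f y) x (Pi.single i 1) = _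
  rw [fderiv_fun_const_smul (hf x) c]
  rfl

lemma pdFun_zero (i : Fin n) : pdFun i (0 : Fn n) = 0 := by
  funext x
  show fderiv ℝ (fun _ => (0:ℝ)) x (Pi.single i 1) = 0
  rw [fderiv_fun_const]
  rfl

lemma pdFun_mul {f g : Fn n} (hf : Differentiable ℝ f) (hg : Differentiable ℝ g) (i : Fin n) :
    pdFun i (f * g) = pdFun i f * g + f * pdFun i g := by
  funext x
  show fderiv ℝ (fun y => f y * g y) x (Pi.single i 1) = _
  rw [fderiv_fun_mul (hf x) (hg x)]
  simp only [ContinuousLinearMap.add_apply, ContinuousLinearMap.coe_smul', Pi.smul_apply,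
    Pi.add_apply, Pi.mul_apply, smul_eq_mul]
  show f x * pdFun i g x + g x * pdFun i f x = pdFun i f x * g x + f x * pdFun i g x
  ring

lemma dOf {f : Fn n} (hf : ContDiff ℝ (⊤ : ℕ∞) f) : Differentiable ℝ f :=
  hf.differentiable (by simp)

lemma smooth_fsum {α : Type*} (s : Finset α) (F : α → Fn n)
    (hF : ∀ a ∈ s, ContDiff ℝ (⊤ : ℕ∞) (F a)) : ContDiff ℝ (⊤ : ℕ∞) (∑ a ∈ s, F a) := by
  have h := ContDiff.sum (s := s) (f := F) (n := ((⊤ : ℕ∞) : WithTop ℕ∞)) hF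
  have he : (∑ a ∈ s, F a) = fun x => ∑ a ∈ s, F a x := by
    funext x
    exact Finset.sum_apply x s F
  rw [he]
  exact h

lemma smooth_smul' (c : ℝ) {f : Fn n} (hf : ContDiff ℝ (⊤ : ℕ∞) f) : ContDiff ℝ (⊤ : ℕ∞) (c • f) :=
  hf.const_smul c

lemma smooth_mul' {f g : Fn n} (hf : ContDiff ℝ (⊤ : ℕ∞) f) (hg : ContDiff ℝ (⊤ : ℕ∞) g) :
    ContDiff ℝ (⊤ : ℕ∞) (f * g) :=
  hf.mul hg

lemma smooth_pd_iter {f : Fn n} (hf : ContDiff ℝ (⊤ : ℕ∞) f) (i : Fin n) (k : ℕ) :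
    ContDiff ℝ (⊤ : ℕ∞) ((pdFun i)^[k] f) := by
  induction k with
  | zero => exact hf
  | succ k ih => rw [Function.iterate_succ_apply']; exact smooth_pdFun ih i

lemma pd_iter_add {f g : Fn n} (hf : ContDiff ℝ (⊤ : ℕ∞) f) (hg : ContDiff ℝ (⊤ : ℕ∞) g) (i : Fin n)
    (k : ℕ) : (pdFun i)^[k] (f + g) = (pdFun i)^[k] f + (pdFun i)^[k] g := by
  induction k with
  | zero => rfl
  | succ k ih =>
    rw [Function.iterate_succ_apply', Function.iterate_succ_apply',
      Function.iterate_succ_apply', ih,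
      pdFun_add (dOf (smooth_pd_iter hf i k)) (dOf (smooth_pd_iter hg i k))]

lemma pd_iter_smul {f : Fn n} (hf : ContDiff ℝ (⊤ : ℕ∞) f) (c : ℝ) (i : Fin n) (k : ℕ) :
    (pdFun i)^[k] (c • f) = c • (pdFun i)^[k] f := by
  induction k with
  | zero => rfl
  | succ k ih =>
    rw [Function.iterate_succ_apply', Function.iterate_succ_apply', ih,
      pdFun_smul (dOf (smooth_pd_iter hf i k)) c]

lemma pd_iter_zero (i : Fin n) (k : ℕ) : (pdFun i)^[k] (0 : Fn n) = 0 := by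
  induction k with
  | zero => rfl
  | succ k ih => rw [Function.iterate_succ_apply', ih, pdFun_zero]

lemma pd_iter_sum {α : Type*} (s : Finset α) (F : α → Fn n)
    (hF : ∀ a ∈ s, ContDiff ℝ (⊤ : ℕ∞) (F a)) (i : Fin n) (k : ℕ) :
    (pdFun i)^[k] (∑ a ∈ s, F a) = ∑ a ∈ s, (pdFun i)^[k] (F a) := by
  classical
  induction s using Finset.induction with
  | empty => simpa using pd_iter_zero i k
  | @insert x s hx ih =>
    rw [Finset.sum_insert hx, Finset.sum_insert hx,
      pd_iter_add (hF x (Finset.mem_insert_self x s))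
        (smooth_fsum s F fun a ha => hF a (Finset.mem_insert_of_mem ha)) i k,
      ih fun a ha => hF a (Finset.mem_insert_of_mem ha)]

lemma pdFun_finset_sum {α : Type*} (s : Finset α) (F : α → Fn n)
    (hF : ∀ a ∈ s, ContDiff ℝ (⊤ : ℕ∞) (F a)) (i : Fin n) :
    pdFun i (∑ a ∈ s, F a) = ∑ a ∈ s, pdFun i (F a) := by
  classical
  induction s using Finset.induction with
  | empty => simpa using pdFun_zero i
  | @insert x s hx ih =>
    rw [Finset.sum_insert hx, Finset.sum_insert hx,
      pdFun_add (dOf (hF x (Finset.mem_insert_self x s)))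
        (dOf (smooth_fsum s F fun a ha => hF a (Finset.mem_insert_of_mem ha))) i,
      ih fun a ha => hF a (Finset.mem_insert_of_mem ha)]

lemma pd_iter_leibniz {f g : Fn n} (hf : ContDiff ℝ (⊤ : ℕ∞) f) (hg : ContDiff ℝ (⊤ : ℕ∞) g) (i : Fin n)
    (m : ℕ) :
    (pdFun i)^[m] (f * g)
      = ∑ k ∈ Finset.range (m + 1),
          (m.choose k : ℝ) • ((pdFun i)^[m - k] f * (pdFun i)^[k] g) := by
  induction m with
  | zero => simp
  | succ m ih =>
    rw [Function.iterate_succ_apply', ih,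
      pdFun_finset_sum (Finset.range (m + 1))
        (fun k => (m.choose k : ℝ) • ((pdFun i)^[m - k] f * (pdFun i)^[k] g))
        (fun k _ => smooth_smul' _
          (smooth_mul' (smooth_pd_iter hf i (m - k)) (smooth_pd_iter hg i k))) i]
    have hterm : ∀ k ∈ Finset.range (m + 1),
        pdFun i ((m.choose k : ℝ) • ((pdFun i)^[m - k] f * (pdFun i)^[k] g))
          = (m.choose k : ℝ) • ((pdFun i)^[m + 1 - k] f * (pdFun i)^[k] g)
            + (m.choose k : ℝ) • ((pdFun i)^[m - k] f * (pdFun i)^[k + 1] g) := by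
      intro k hk
      have hk' : k ≤ m := Nat.lt_succ_iff.mp (Finset.mem_range.mp hk)
      have e1 : m + 1 - k = (m - k) + 1 := by omega
      rw [pdFun_smul (dOf (smooth_mul' (smooth_pd_iter hf i (m - k)) (smooth_pd_iter hg i k))) _ i,
        pdFun_mul (dOf (smooth_pd_iter hf i (m - k))) (dOf (smooth_pd_iter hg i k)) i,
        smul_add, e1, ← Function.iterate_succ_apply' (pdFun i) (m - k) f,
        ← Function.iterate_succ_apply' (pdFun i) k g]
    rw [Finset.sum_congr rfl hterm, Finset.sum_add_distrib]
    -- now combine the two sums via Pascal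
    have h1 : ∑ k ∈ Finset.range (m + 1),
        (m.choose k : ℝ) • ((pdFun i)^[m - k] f * (pdFun i)^[k + 1] g)
        = ∑ k ∈ Finset.range (m + 1 + 1), (if k = 0 then 0 else
            ((m.choose (k - 1) : ℝ)) • ((pdFun i)^[m + 1 - k] f * (pdFun i)^[k] g)) := by
      rw [Finset.sum_range_succ' (fun k => if k = 0 then 0 else
            ((m.choose (k - 1) : ℝ)) • ((pdFun i)^[m + 1 - k] f * (pdFun i)^[k] g)) (m+1)]
      rw [if_pos rfl, add_zero]
      apply Finset.sum_congr rfl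
      intro k hk
      rw [if_neg (Nat.succ_ne_zero k), Nat.add_sub_cancel]
      have h3 : m + 1 - (k + 1) = m - k := by omega
      rw [h3]
    have h2 : ∑ k ∈ Finset.range (m + 1),
        (m.choose k : ℝ) • ((pdFun i)^[m + 1 - k] f * (pdFun i)^[k] g)
        = ∑ k ∈ Finset.range (m + 1 + 1), (if k = m + 1 then 0 else
            ((m.choose k : ℝ)) • ((pdFun i)^[m + 1 - k] f * (pdFun i)^[k] g)) := by
      rw [Finset.sum_range_succ (fun k => if k = m + 1 then 0 else
            ((m.choose k : ℝ)) • ((pdFun i)^[m + 1 - k] f * (pdFun i)^[k] g)) (m+1)]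
      rw [if_pos rfl, add_zero]
      apply Finset.sum_congr rfl
      intro k hk
      rw [if_neg (Nat.ne_of_lt (Finset.mem_range.mp hk))]
    rw [h1, h2, ← Finset.sum_add_distrib]
    apply Finset.sum_congr rfl
    intro k hk
    rcases Nat.eq_zero_or_pos k with h0 | h0
    · subst h0
      simp
    · obtain ⟨j, rfl⟩ : ∃ j, k = j + 1 := ⟨k - 1, by omega⟩
      rw [if_neg (Nat.succ_ne_zero j), Nat.add_sub_cancel]
      by_cases hm : j + 1 = m + 1
      · rw [if_pos hm, zero_add]
        have hjm : j = m := by omega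
        subst hjm
        norm_num
      · rw [if_neg hm, ← add_smul]
        congr 1
        have hcs : (m+1).choose (j+1) = m.choose j + m.choose (j+1) := Nat.choose_succ_succ _ _
        push_cast [hcs]
        ring
noncomputable def opL (l : List (Fin n)) (d : Fin n →₀ ℕ) (f : Fn n) : Fn n :=
  l.foldr (fun i g => (pdFun i)^[d i] g) f

lemma monOpFun_eq_opL (d : Fin n →₀ ℕ) (f : Fn n) :
    monOpFun d f = opL (Finset.univ : Finset (Fin n)).toList d f := rfl

lemma opL_cons (i : Fin n) (t : List (Fin n)) (d : Fin n →₀ ℕ) (f : Fn n) :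
    opL (i :: t) d f = (pdFun i)^[d i] (opL t d f) := rfl

lemma smooth_opL (l : List (Fin n)) (d : Fin n →₀ ℕ) {f : Fn n} (hf : ContDiff ℝ (⊤ : ℕ∞) f) :
    ContDiff ℝ (⊤ : ℕ∞) (opL l d f) := by
  induction l with
  | nil => exact hf
  | cons i t ih => exact smooth_pd_iter ih i (d i)

lemma opL_congr (l : List (Fin n)) {d d' : Fin n →₀ ℕ} (h : ∀ j ∈ l, d j = d' j) (f : Fn n) :
    opL l d f = opL l d' f := by
  induction l with
  | nil => rfl
  | cons i t ih =>
    rw [opL_cons, opL_cons, ih fun j hj => h j (List.mem_cons_of_mem i hj),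
      h i List.mem_cons_self]

lemma opL_single (i : Fin n) (t : List (Fin n)) (hit : i ∉ t) (u : Fin n →₀ ℕ) (hu : u i = 0)
    (j : ℕ) (h : Fn n) :
    (pdFun i)^[j] (opL t u h) = opL (i :: t) (u + Finsupp.single i j) h := by
  rw [opL_cons]
  have h1 : (u + Finsupp.single i j) i = j := by
    rw [Finsupp.add_apply, Finsupp.single_eq_same, hu, zero_add]
  rw [h1, opL_congr t (d := u) (d' := u + Finsupp.single i j)
    (fun j' hj' => by
      rw [Finsupp.add_apply, Finsupp.single_apply,
        if_neg (fun he : i = j' => hit (he ▸ hj')), add_zero]) h]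

lemma opL_leibniz (l : List (Fin n)) (hl : l.Nodup) (d : Fin n →₀ ℕ)
    (hd : ∀ j ∈ d.support, j ∈ l) {f g : Fn n}
    (hf : ContDiff ℝ (⊤ : ℕ∞) f) (hg : ContDiff ℝ (⊤ : ℕ∞) g) :
    opL l d (f * g)
      = ∑ e ∈ Finset.Iic d, (∏ j, ((d j).choose (e j) : ℝ)) •
          (opL l (d - e) f * opL l e g) := by
  induction l generalizing d with
  | nil =>
    have hd0 : d = 0 := by
      ext j
      by_contra hj
      exact absurd (hd j (Finsupp.mem_support_iff.mpr hj)) List.not_mem_nil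
    subst hd0
    have hIic : Finset.Iic (0 : Fin n →₀ ℕ) = {0} := by
      ext e
      simp only [Finset.mem_Iic, Finset.mem_singleton]
      exact ⟨fun h => le_antisymm h zero_le, fun h => h ▸ le_rfl⟩
    rw [hIic, Finset.sum_singleton]
    simp only [Finsupp.coe_zero, Pi.zero_apply, Nat.choose_zero_right, Nat.cast_one,
      Finset.prod_const_one, tsub_zero, one_smul]
    rfl
  | cons i t ih =>
    have hit : i ∉ t := (List.nodup_cons.mp hl).1
    have ht : t.Nodup := (List.nodup_cons.mp hl).2
    have hmi : (d.erase i) i = 0 := Finsupp.erase_same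
    have hm_t : ∀ j ∈ (d.erase i).support, j ∈ t := by
      intro j hj
      rw [Finsupp.support_erase, Finset.mem_erase] at hj
      rcases List.mem_cons.mp (hd j hj.2) with h | h
      · exact absurd h hj.1
      · exact h
    have hagree : ∀ j ∈ t, d j = (d.erase i) j := fun j hj =>
      (Finsupp.erase_ne (fun he : j = i => hit (he ▸ hj))).symm
    rw [opL_cons, opL_congr t hagree, ih ht (d.erase i) hm_t,
      pd_iter_sum _ _ (fun e _ => smooth_smul' _ (smooth_mul'
        (smooth_opL t (d.erase i - e) hf) (smooth_opL t e hg))) i (d i)]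
    have hterm : ∀ e ∈ Finset.Iic (d.erase i),
        (pdFun i)^[d i] ((∏ j, (((d.erase i) j).choose (e j) : ℝ)) •
            (opL t (d.erase i - e) f * opL t e g))
          = ∑ k ∈ Finset.range (d i + 1),
              ((∏ j, (((d.erase i) j).choose (e j) : ℝ)) * ((d i).choose k : ℝ)) •
                (opL (i :: t) ((d.erase i - e) + Finsupp.single i (d i - k)) f
                  * opL (i :: t) (e + Finsupp.single i k) g) := by
      intro e he
      have hef : e ≤ d.erase i := Finset.mem_Iic.mp he
      have hei : e i = 0 := by
        have h0 := Finsupp.le_def.mp hef i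
        rw [hmi] at h0
        exact Nat.le_zero.mp h0
      have hmei : (d.erase i - e) i = 0 := by
        rw [Finsupp.tsub_apply, hmi, Nat.zero_sub]
      rw [pd_iter_smul (smooth_mul' (smooth_opL t _ hf) (smooth_opL t _ hg)) _ i (d i),
        pd_iter_leibniz (smooth_opL t _ hf) (smooth_opL t _ hg) i (d i), Finset.smul_sum]
      apply Finset.sum_congr rfl
      intro k hk
      rw [smul_smul, opL_single i t hit _ hmei _ f, opL_single i t hit _ hei _ g]
    rw [Finset.sum_congr rfl hterm]
    rw [← Finset.sum_product (Finset.Iic (d.erase i)) (Finset.range (d i + 1))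
      (fun p => ((∏ j, (((d.erase i) j).choose (p.1 j) : ℝ)) * ((d i).choose p.2 : ℝ)) •
        (opL (i :: t) ((d.erase i - p.1) + Finsupp.single i (d i - p.2)) f
          * opL (i :: t) (p.1 + Finsupp.single i p.2) g))]
    refine Finset.sum_nbij' (fun p => p.1 + Finsupp.single i p.2)
      (fun E => (E.erase i, E i)) ?_ ?_ ?_ ?_ ?_
    · rintro ⟨e, k⟩ hp
      rw [Finset.mem_product] at hp
      have hef : e ≤ d.erase i := Finset.mem_Iic.mp hp.1
      have hei : e i = 0 := by
        have h0 := Finsupp.le_def.mp hef i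
        rw [hmi] at h0
        exact Nat.le_zero.mp h0
      have hk : k ≤ d i := Nat.lt_succ_iff.mp (Finset.mem_range.mp hp.2)
      rw [Finset.mem_Iic]
      rw [Finsupp.le_def]
      intro j
      rw [Finsupp.add_apply, Finsupp.single_apply]
      by_cases hji : i = j
      · subst hji
        rw [if_pos rfl, hei, zero_add]
        exact hk
      · rw [if_neg hji, add_zero]
        have h1 := Finsupp.le_def.mp hef j
        rw [Finsupp.erase_ne (fun he : j = i => hji he.symm)] at h1
        exact h1
    · intro E hE
      have hEd := Finsupp.le_def.mp (Finset.mem_Iic.mp hE)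
      rw [Finset.mem_product]
      constructor
      · rw [Finset.mem_Iic, Finsupp.le_def]
        intro j
        by_cases hji : j = i
        · subst hji
          rw [Finsupp.erase_same]
          exact Nat.zero_le _
        · rw [Finsupp.erase_ne hji, Finsupp.erase_ne hji]
          exact hEd j
      · rw [Finset.mem_range, Nat.lt_succ_iff]
        exact hEd i
    · rintro ⟨e, k⟩ hp
      rw [Finset.mem_product] at hp
      have hef : e ≤ d.erase i := Finset.mem_Iic.mp hp.1
      have hei : e i = 0 := by
        have h0 := Finsupp.le_def.mp hef i
        rw [hmi] at h0
        exact Nat.le_zero.mp h0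
      have h1 : (e + Finsupp.single i k).erase i = e := by
        ext j
        by_cases hji : j = i
        · subst hji
          rw [Finsupp.erase_same, hei]
        · rw [Finsupp.erase_ne hji, Finsupp.add_apply, Finsupp.single_apply,
            if_neg (fun he : i = j => hji he.symm), add_zero]
      have h2 : (e + Finsupp.single i k) i = k := by
        rw [Finsupp.add_apply, Finsupp.single_eq_same, hei, zero_add]
      rw [Prod.mk.injEq]
      exact ⟨h1, h2⟩
    · intro E hE
      exact Finsupp.erase_add_single i E
    · rintro ⟨e, k⟩ hp
      rw [Finset.mem_product] at hp
      have hef : e ≤ d.erase i := Finset.mem_Iic.mp hp.1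
      have hei : e i = 0 := by
        have h0 := Finsupp.le_def.mp hef i
        rw [hmi] at h0
        exact Nat.le_zero.mp h0
      have h2 : (e + Finsupp.single i k) i = k := by
        rw [Finsupp.add_apply, Finsupp.single_eq_same, hei, zero_add]
      have hsub : d - (e + Finsupp.single i k)
          = (d.erase i - e) + Finsupp.single i (d i - k) := by
        ext j
        rw [Finsupp.tsub_apply, Finsupp.add_apply, Finsupp.add_apply, Finsupp.tsub_apply,
          Finsupp.single_apply, Finsupp.single_apply]
        by_cases hji : i = j
        · subst hji
          rw [if_pos rfl, if_pos rfl, hei, Finsupp.erase_same, zero_add, Nat.zero_sub,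
            zero_add]
        · rw [if_neg hji, if_neg hji, add_zero, add_zero,
            Finsupp.erase_ne (fun he : j = i => hji he.symm)]
      have hcoef : (∏ j, ((d j).choose ((e + Finsupp.single i k) j) : ℝ))
          = (∏ j, (((d.erase i) j).choose (e j) : ℝ)) * ((d i).choose k : ℝ) := by
        rw [← Finset.mul_prod_erase Finset.univ
            (fun j => ((d j).choose ((e + Finsupp.single i k) j) : ℝ)) (Finset.mem_univ i),
          ← Finset.mul_prod_erase Finset.univ
            (fun j => (((d.erase i) j).choose (e j) : ℝ)) (Finset.mem_univ i)]
        have hpr : ∏ j ∈ Finset.univ.erase i,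
              ((d j).choose ((e + Finsupp.single i k) j) : ℝ)
            = ∏ j ∈ Finset.univ.erase i, (((d.erase i) j).choose (e j) : ℝ) :=
          Finset.prod_congr rfl fun j hj => by
            have hji : j ≠ i := (Finset.mem_erase.mp hj).1
            rw [Finsupp.add_apply, Finsupp.single_apply,
              if_neg (fun he : i = j => hji he.symm), add_zero, Finsupp.erase_ne hji]
        rw [hpr, h2, Finsupp.erase_same, hei]
        simp only [Nat.choose_self, Nat.cast_one, one_mul]
        ring
      rw [hsub, hcoef]
lemma monOp_sum {α : Type*} (s : Finset α) (h : α → MvPolynomial (Fin n) ℝ) (e : Fin n →₀ ℕ) :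
    monOp e (∑ a ∈ s, h a) = ∑ a ∈ s, monOp e (h a) := by
  classical
  induction s using Finset.induction with
  | empty => simpa using monOp_zero e
  | insert _ _ hx ih => rw [Finset.sum_insert hx, Finset.sum_insert hx, monOp_add, ih]

lemma diffOpFun_eq_sum (a : MvPolynomial (Fin n) ℝ) (f : Fn n) (x : Fin n → ℝ)
    (s : Finset (Fin n →₀ ℕ)) (hs : a.support ⊆ s) :
    diffOpFun a f x = ∑ d ∈ s, coeff d a * monOpFun d f x := by
  unfold diffOpFun
  rw [Finsupp.sum]
  exact Finset.sum_subset hs fun d _ hd => by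
    rw [Finsupp.notMem_support_iff.mp hd, zero_mul]

lemma diffOpFun_monomial (k : Fin n →₀ ℕ) (a : ℝ) (f : Fn n) (x : Fin n → ℝ) :
    diffOpFun (monomial k a) f x = a * monOpFun k f x := by
  unfold diffOpFun
  rw [sum_monomial_eq (by rw [zero_mul])]

lemma diffOpFun_add_poly (a b : MvPolynomial (Fin n) ℝ) (f : Fn n) (x : Fin n → ℝ) :
    diffOpFun (a + b) f x = diffOpFun a f x + diffOpFun b f x := by
  rw [diffOpFun_eq_sum a f x (a.support ∪ b.support) Finset.subset_union_left,
    diffOpFun_eq_sum b f x (a.support ∪ b.support) Finset.subset_union_right,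
    diffOpFun_eq_sum (a + b) f x (a.support ∪ b.support) MvPolynomial.support_add,
    ← Finset.sum_add_distrib]
  exact Finset.sum_congr rfl fun d _ => by rw [MvPolynomial.coeff_add]; ring

lemma diffOpFun_smul_poly (c : ℝ) (a : MvPolynomial (Fin n) ℝ) (f : Fn n) (x : Fin n → ℝ) :
    diffOpFun (c • a) f x = c * diffOpFun a f x := by
  rw [diffOpFun_eq_sum (c • a) f x a.support MvPolynomial.support_smul,
    diffOpFun_eq_sum a f x a.support subset_rfl, Finset.mul_sum]
  exact Finset.sum_congr rfl fun d _ => by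
    rw [MvPolynomial.coeff_smul, smul_eq_mul]; ring

lemma diffOpFun_zero_poly (f : Fn n) (x : Fin n → ℝ) : diffOpFun (0 : MvPolynomial (Fin n) ℝ) f x = 0 := by
  unfold diffOpFun
  exact Finsupp.sum_zero_index

lemma diffOpFun_sum_poly {α : Type*} (s : Finset α) (h : α → MvPolynomial (Fin n) ℝ)
    (f : Fn n) (x : Fin n → ℝ) :
    diffOpFun (∑ a ∈ s, h a) f x = ∑ a ∈ s, diffOpFun (h a) f x := by
  classical
  induction s using Finset.induction with
  | empty => simpa using diffOpFun_zero_poly f x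
  | insert _ _ hx ih => rw [Finset.sum_insert hx, Finset.sum_insert hx, diffOpFun_add_poly, ih]

lemma monOpFun_leibniz_at (d : Fin n →₀ ℕ) {f g : Fn n}
    (hf : ContDiff ℝ (⊤ : ℕ∞) f) (hg : ContDiff ℝ (⊤ : ℕ∞) g) (x : Fin n → ℝ) :
    monOpFun d (f * g) x
      = ∑ e ∈ Finset.Iic d, (∏ j, ((d j).choose (e j) : ℝ)) *
          (monOpFun (d - e) f x * monOpFun e g x) := by
  have h := opL_leibniz (Finset.univ : Finset (Fin n)).toList (Finset.nodup_toList _) d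
    (fun j _ => Finset.mem_toList.mpr (Finset.mem_univ j)) hf hg
  have h2 := congrFun h x
  rw [monOpFun_eq_opL, h2, Finset.sum_apply]
  exact Finset.sum_congr rfl fun e _ => by
    rw [Pi.smul_apply, Pi.mul_apply, smul_eq_mul, monOpFun_eq_opL, monOpFun_eq_opL]

lemma prod_desc_eq_wfac_mul_choose (d e : Fin n →₀ ℕ) :
    (∏ j, (((d j).descFactorial (e j)) : ℝ))
      = wfac e * ∏ j, ((d j).choose (e j) : ℝ) := by
  unfold wfac
  rw [← Finset.prod_mul_distrib]
  apply Finset.prod_congr rfl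
  intro j _
  exact_mod_cast congrArg (Nat.cast (R := ℝ))
    (Nat.descFactorial_eq_factorial_mul_choose (d j) (e j))

lemma prod_choose_eq_zero {d e : Fin n →₀ ℕ} (h : ¬ e ≤ d) :
    (∏ j, ((d j).choose (e j) : ℝ)) = 0 := by
  have : ∃ j, d j < e j := by
    by_contra hc
    push_neg at hc
    exact h (Finsupp.le_def.mpr fun j => hc j)
  obtain ⟨j, hj⟩ := this
  apply Finset.prod_eq_zero (Finset.mem_univ j)
  exact_mod_cast congrArg (Nat.cast (R := ℝ)) (Nat.choose_eq_zero_of_lt hj)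

lemma monOp_expand (p : MvPolynomial (Fin n) ℝ) (e : Fin n →₀ ℕ) :
    monOp e p = ∑ d ∈ p.support, monomial (d - e)
      (coeff d p * ∏ j, ((d j).descFactorial (e j) : ℝ)) := by
  conv_lhs => rw [← support_sum_monomial_coeff p]
  rw [monOp_sum]
  exact Finset.sum_congr rfl fun d _ => monOp_monomial e d (coeff d p)

lemma key1 (p : MvPolynomial (Fin n) ℝ) {f g : Fn n}
    (hf : ContDiff ℝ (⊤ : ℕ∞) f) (hg : ContDiff ℝ (⊤ : ℕ∞) g) (x : Fin n → ℝ)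
    (E : Finset (Fin n →₀ ℕ)) (hE : Finset.Iic (p.support.sup id) ⊆ E) :
    diffOpFun p (f * g) x
      = ∑ e ∈ E, (wfac e)⁻¹ * (diffOpFun (monOp e p) f x * monOpFun e g x) := by
  have hRHS : ∀ e : Fin n →₀ ℕ, diffOpFun (monOp e p) f x
      = ∑ d ∈ p.support, (coeff d p * ∏ j, ((d j).descFactorial (e j) : ℝ))
          * monOpFun (d - e) f x := by
    intro e
    rw [monOp_expand, diffOpFun_sum_poly]
    exact Finset.sum_congr rfl fun d _ => diffOpFun_monomial _ _ f x
  calc diffOpFun p (f * g) x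
      = ∑ d ∈ p.support, coeff d p * monOpFun d (f * g) x :=
        diffOpFun_eq_sum p (f * g) x p.support subset_rfl
    _ = ∑ d ∈ p.support, ∑ e ∈ E, coeff d p * ((∏ j, ((d j).choose (e j) : ℝ)) *
          (monOpFun (d - e) f x * monOpFun e g x)) := by
        apply Finset.sum_congr rfl
        intro d hd
        rw [monOpFun_leibniz_at d hf hg x, Finset.mul_sum]
        apply Finset.sum_subset
        · intro e he
          apply hE
          rw [Finset.mem_Iic] at he ⊢
          exact le_trans he (Finset.le_sup (f := id) hd)
        · intro e heE hei
          rw [Finset.mem_Iic] at hei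
          rw [prod_choose_eq_zero hei]
          ring
    _ = ∑ e ∈ E, (wfac e)⁻¹ * (diffOpFun (monOp e p) f x * monOpFun e g x) := by
        rw [Finset.sum_comm]
        apply Finset.sum_congr rfl
        intro e _
        rw [hRHS e, Finset.sum_mul, Finset.mul_sum]
        apply Finset.sum_congr rfl
        intro d _
        rw [prod_desc_eq_wfac_mul_choose d e]
        rw [show (wfac e)⁻¹ * ((coeff d p * (wfac e * ∏ j, ((d j).choose (e j) : ℝ)))
              * monOpFun (d - e) f x * monOpFun e g x)
            = ((wfac e)⁻¹ * wfac e) * ((coeff d p * ∏ j, ((d j).choose (e j) : ℝ))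
              * monOpFun (d - e) f x * monOpFun e g x) from by ring,
          inv_mul_cancel₀ (wfac_pos e).ne', one_mul]
        ring
lemma fischer_add_right (q a b : MvPolynomial (Fin n) ℝ) :
    fischer q (a + b) = fischer q a + fischer q b := by
  rw [fischer_comm, fischer_add_left, fischer_comm a q, fischer_comm b q]

lemma fischer_smul_right (c : ℝ) (q a : MvPolynomial (Fin n) ℝ) :
    fischer q (c • a) = c * fischer q a := by
  rw [fischer_comm, fischer_smul_left, fischer_comm a q]

lemma fischer_zero_right (q : MvPolynomial (Fin n) ℝ) : fischer q 0 = 0 := by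
  rw [fischer_comm, fischer_zero_left]

lemma fischer_zero_on_span {q : MvPolynomial (Fin n) ℝ} {ι : Type*}
    {pfam : ι → MvPolynomial (Fin n) ℝ} (h : ∀ i, fischer q (pfam i) = 0)
    {r : MvPolynomial (Fin n) ℝ} (hr : r ∈ Submodule.span ℝ (Set.range pfam)) :
    fischer q r = 0 := by
  induction hr using Submodule.span_induction with
  | mem y hy => obtain ⟨i, rfl⟩ := hy; exact h i
  | zero => exact fischer_zero_right q
  | add y z hy hz hy' hz' => rw [fischer_add_right, hy', hz', add_zero]
  | smul c y hy hy' => rw [fischer_smul_right, hy', mul_zero]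

end StmtAux

/-- generalized Leibniz formula. If `(p_i)_{i∈I}` is an orthonormal basis of
the span `R` of all translates of `p` for the Fischer inner product, and `p̆_i = ∂(p_i)p`,
then `∂(p)(fg) = ∑_i ∂(p̆_i)f · ∂(p_i)g` for all smooth functions `f, g` on `ℝⁿ`. -/
theorem stmt_3 {n : ℕ} (p : MvPolynomial (Fin n) ℝ) {ι : Type*} [Fintype ι]
    (pfam : ι → MvPolynomial (Fin n) ℝ)
    (hmem : ∀ i, pfam i ∈ translateSpan p)
    (hspan : translateSpan p ≤ Submodule.span ℝ (Set.range pfam))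
    (hortho : ∀ i j, fischer (pfam i) (pfam j) = if i = j then 1 else 0)
    (f g : (Fin n → ℝ) → ℝ) (hf : ContDiff ℝ (⊤ : ℕ∞) f) (hg : ContDiff ℝ (⊤ : ℕ∞) g) (x : Fin n → ℝ) :
    diffOpFun p (f * g) x
      = ∑ i, diffOpFun (diffOp (pfam i) p) f x * diffOpFun (pfam i) g x := by
  classical
  open StmtAux in
  set D : Fin n →₀ ℕ := p.support.sup id with hDdef
  set E : Finset (Fin n →₀ ℕ) :=
    Finset.Iic D ∪ Finset.univ.biUnion (fun i : ι => (pfam i).support) with hEdef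
  have hE1 : Finset.Iic D ⊆ E := by
    rw [hEdef]
    exact Finset.subset_union_left
  have hsupp : ∀ i : ι, (pfam i).support ⊆ E := by
    intro i
    rw [hEdef]
    exact subset_trans (Finset.subset_biUnion_of_mem (fun j : ι => (pfam j).support)
      (Finset.mem_univ i)) Finset.subset_union_right
  rw [StmtAux.key1 p hf hg x E hE1]
  have claimA : ∀ e : Fin n →₀ ℕ, diffOpFun (monOp e p) f x
      = ∑ i, fischer (monomial e 1) (pfam i) * diffOpFun (diffOp (pfam i) p) f x := by
    intro e
    have horth : ∀ j, fischer
        (monomial e 1 - ∑ i, fischer (monomial e 1) (pfam i) • pfam i) (pfam j) = 0 := by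
      intro j
      rw [sub_eq_add_neg, StmtAux.fischer_add_left, ← neg_one_smul ℝ
          (∑ i, fischer (monomial e 1) (pfam i) • pfam i),
        StmtAux.fischer_smul_left, StmtAux.fischer_sum_left]
      have : ∀ i : ι, fischer (fischer (monomial e 1) (pfam i) • pfam i) (pfam j)
          = if i = j then fischer (monomial e 1) (pfam j) else 0 := by
        intro i
        rw [StmtAux.fischer_smul_left, hortho i j]
        by_cases hij : i = j
        · subst hij; rw [if_pos rfl, if_pos rfl, mul_one]
        · rw [if_neg hij, if_neg hij, mul_zero]
      rw [Finset.sum_congr rfl fun i _ => this i, Finset.sum_ite_eq' Finset.univ j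
        (fun _ => fischer (monomial e 1) (pfam j)), if_pos (Finset.mem_univ j)]
      ring
    have hzero : diffOp
        (monomial e 1 - ∑ i, fischer (monomial e 1) (pfam i) • pfam i) p = 0 := by
      apply StmtAux.diffOp_eq_zero_of_orth
      intro a
      exact StmtAux.fischer_zero_on_span horth
        (hspan (Submodule.subset_span ⟨a, rfl⟩))
    have hqd : diffOp (monomial e 1) p
        = ∑ i, fischer (monomial e 1) (pfam i) • diffOp (pfam i) p := by
      have hsplit : monomial e 1
          = (monomial e 1 - ∑ i, fischer (monomial e 1) (pfam i) • pfam i)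
            + ∑ i, fischer (monomial e 1) (pfam i) • pfam i := (sub_add_cancel _ _).symm
      conv_lhs => rw [hsplit]
      rw [StmtAux.diffOp_add_left, hzero, zero_add, StmtAux.diffOp_sum_left]
      exact Finset.sum_congr rfl fun i _ => StmtAux.diffOp_smul_left _ _ _
    rw [← StmtAux.diffOp_monomial_one e p, hqd, StmtAux.diffOpFun_sum_poly]
    exact Finset.sum_congr rfl fun i _ => StmtAux.diffOpFun_smul_poly _ _ f x
  have claimB : ∀ i : ι,
      ∑ e ∈ E, (StmtAux.wfac e)⁻¹ * (fischer (monomial e 1) (pfam i) * monOpFun e g x)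
        = diffOpFun (pfam i) g x := by
    intro i
    rw [StmtAux.diffOpFun_eq_sum (pfam i) g x E (hsupp i)]
    apply Finset.sum_congr rfl
    intro e _
    rw [StmtAux.fischer_monomial_one_right]
    rw [show (StmtAux.wfac e)⁻¹ * (coeff e (pfam i) * StmtAux.wfac e * monOpFun e g x)
        = ((StmtAux.wfac e)⁻¹ * StmtAux.wfac e) * (coeff e (pfam i) * monOpFun e g x)
        from by ring,
      inv_mul_cancel₀ (StmtAux.wfac_pos e).ne', one_mul]
  calc ∑ e ∈ E, (StmtAux.wfac e)⁻¹ * (diffOpFun (monOp e p) f x * monOpFun e g x)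
      = ∑ e ∈ E, ∑ i, diffOpFun (diffOp (pfam i) p) f x
          * ((StmtAux.wfac e)⁻¹ * (fischer (monomial e 1) (pfam i) * monOpFun e g x)) := by
        apply Finset.sum_congr rfl
        intro e _
        rw [claimA e, Finset.sum_mul, Finset.mul_sum]
        apply Finset.sum_congr rfl
        intro i _
        ring
    _ = ∑ i, diffOpFun (diffOp (pfam i) p) f x
          * ∑ e ∈ E, (StmtAux.wfac e)⁻¹ * (fischer (monomial e 1) (pfam i) * monOpFun e g x) := by
        rw [Finset.sum_comm]
        exact Finset.sum_congr rfl fun i _ => (Finset.mul_sum _ _ _).symm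
    _ = ∑ i, diffOpFun (diffOp (pfam i) p) f x * diffOpFun (pfam i) g x := by
        exact Finset.sum_congr rfl fun i _ => by rw [claimB i]
end

section
/- Let V be a Euclidean Jordan algebra of rank r, dimension n, with Peirce constant d even, and suppose either d ≡ 0 (mod 4), or d ≡ 2 (mod 4) with r odd. Then the zeta distributions Z_±(f,s) = ∫_V f(x) det(x)^{s,±} dx satisfy Z_+(f̂, s − n/r) = 2^r (2π)^{−rs} Γ_Ω(s) cos^r(πs/2) Z_+(f, −s) and Z_−(f̂, s − n/r) = (2i)^r (2π)^{−rs} Γ_Ω(s) sin^r(πs/2) Z_−(f, −s), where Γ_Ω(s) = (2π)^{(n−r)/2} ∏_{j=1}^r Γ(s − (j−1)d/2), assuming the Faraut–Satake system of functional equations Z_ℓ(f̂, s − n/r) = (2π)^{−rs} e^{iπrs/2} Γ_Ω(s) Σ_κ u_{ℓ,κ}(s) Z_κ(f,−s) with Σ_{ℓ=0}^r y^ℓ u_{ℓ,κ}(s) = (y + e^{−iπs})^κ (y e^{−iπs} + 1)^{r−κ}. -/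
/-!
Evaluating the generating polynomial of the `κ`-th column of `u` at `y = 1` and `y = -1` gives
`∑_ℓ u_{ℓ,κ}(s) = (1 + e^{-iπs})^r` and `∑_ℓ (-1)^ℓ u_{ℓ,κ}(s) = (-1)^κ (1 - e^{-iπs})^r`, so summing
the Faraut–Satake system with weights `1`, resp. `(-1)^ℓ`, diagonalises it. The factor `e^{iπrs/2}`
then turns `(1 ± e^{-iπs})^r` into `(2 cos(πs/2))^r`, resp. `(2i sin(πs/2))^r`.
-/

set_option autoImplicit false

open Complex Finset

/-- The Gindikin gamma function `Γ_Ω(s) = (2π)^{(n−r)/2} ∏_{j=1}^r Γ(s − (j−1)d/2)`. -/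
noncomputable def GammaOmega (r n d : ℕ) (s : ℂ) : ℂ :=
  (2 * (Real.pi : ℂ)) ^ (((n : ℂ) - (r : ℂ)) / 2)
    * ∏ j ∈ range r, Complex.Gamma (s - (j : ℂ) * (d : ℂ) / 2)

theorem Finset.sum_mul_eq_of_linear_system {ι κ : Type*} {s : Finset ι} {t : Finset κ}
    {a w : ι → ℂ} {b v : κ → ℂ} {u : ι → κ → ℂ} {C c : ℂ}
    (ha : ∀ l ∈ s, a l = C * ∑ k ∈ t, u l k * b k)
    (hcol : ∀ k ∈ t, ∑ l ∈ s, w l * u l k = c * v k) :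
    ∑ l ∈ s, w l * a l = C * c * ∑ k ∈ t, v k * b k := by
  calc ∑ l ∈ s, w l * a l = C * ∑ k ∈ t, (∑ l ∈ s, w l * u l k) * b k := by
        simp only [sum_congr rfl fun l hl => congrArg (w l * ·) (ha l hl), Finset.mul_sum,
          Finset.sum_mul]
        rw [Finset.sum_comm]
        exact sum_congr rfl fun _ _ => sum_congr rfl fun _ _ => by ring
    _ = C * c * ∑ k ∈ t, v k * b k := by
        simp only [sum_congr rfl fun k hk => congrArg (· * b k) (hcol k hk), Finset.mul_sum]
        exact sum_congr rfl fun _ _ => by ring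

section GeneratingPolynomial

variable {r k : ℕ} {E : ℂ} {v : ℕ → ℂ}

theorem sum_eq_of_generating_polynomial_one (hk : k ≤ r)
    (hv : ∑ l ∈ range (r + 1), (1 : ℂ) ^ l * v l = (1 + E) ^ k * (1 * E + 1) ^ (r - k)) :
    ∑ l ∈ range (r + 1), v l = (1 + E) ^ r := by
  simpa [add_comm E 1, ← pow_add, Nat.add_sub_cancel' hk] using hv

theorem sum_neg_one_pow_mul_eq_of_generating_polynomial_neg_one (hk : k ≤ r)
    (hv : ∑ l ∈ range (r + 1), (-1 : ℂ) ^ l * v l = (-1 + E) ^ k * (-1 * E + 1) ^ (r - k)) :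
    ∑ l ∈ range (r + 1), (-1 : ℂ) ^ l * v l = (-1) ^ k * (1 - E) ^ r := by
  rw [hv, show -1 + E = -1 * (1 - E) by ring, show -1 * E + 1 = 1 - E by ring, mul_pow,
    mul_assoc, ← pow_add, Nat.add_sub_cancel' hk]

end GeneratingPolynomial

theorem Complex.exp_I_mul_mul_one_add_exp_neg (z : ℂ) :
    exp (I * z) * (1 + exp (-(2 * I * z))) = 2 * cos z := by
  rw [mul_add, ← exp_add, cos, show I * z + -(2 * I * z) = -z * I by ring, mul_comm I z]
  ring

theorem Complex.exp_I_mul_mul_one_sub_exp_neg (z : ℂ) :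
    exp (I * z) * (1 - exp (-(2 * I * z))) = 2 * I * sin z := by
  rw [mul_sub, ← exp_add, sin, show I * z + -(2 * I * z) = -z * I by ring, mul_comm I z]
  linear_combination (exp (z * I) - exp (-z * I)) * I_sq

theorem stmt_8_general (r n d : ℕ)
    (u : ℕ → ℕ → ℂ → ℂ)
    (hgen : ∀ κ ≤ r, ∀ s : ℂ, ∀ y : ℝ,
      ∑ l ∈ range (r + 1), (y : ℂ) ^ l * u l κ s
        = ((y : ℂ) + exp (-I * (Real.pi : ℂ) * s)) ^ κ * ((y : ℂ) * exp (-I * (Real.pi : ℂ) * s) + 1) ^ (r - κ))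
    (A B : ℕ → ℂ → ℂ)
    (hFS : ∀ l ≤ r, ∀ s : ℂ,
      A l (s - (n : ℂ) / (r : ℂ))
        = (2 * (Real.pi : ℂ)) ^ (-(r : ℂ) * s) * exp (I * (Real.pi : ℂ) * r * s / 2) * GammaOmega r n d s
            * ∑ κ ∈ range (r + 1), u l κ s * B κ (-s))
    (s : ℂ) :
    (∑ l ∈ range (r + 1), A l (s - (n : ℂ) / (r : ℂ))
        = 2 ^ r * (2 * (Real.pi : ℂ)) ^ (-(r : ℂ) * s) * GammaOmega r n d s
            * cos ((Real.pi : ℂ) * s / 2) ^ r * ∑ l ∈ range (r + 1), B l (-s)) ∧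
    (∑ l ∈ range (r + 1), (-1 : ℂ) ^ l * A l (s - (n : ℂ) / (r : ℂ))
        = (2 * I) ^ r * (2 * (Real.pi : ℂ)) ^ (-(r : ℂ) * s) * GammaOmega r n d s
            * sin ((Real.pi : ℂ) * s / 2) ^ r * ∑ l ∈ range (r + 1), (-1 : ℂ) ^ l * B l (-s)) := by
  have hA : ∀ l ∈ range (r + 1), A l (s - (n : ℂ) / (r : ℂ))
      = (2 * (Real.pi : ℂ)) ^ (-(r : ℂ) * s) * exp (I * (Real.pi : ℂ) * r * s / 2)
        * GammaOmega r n d s * ∑ κ ∈ range (r + 1), u l κ s * B κ (-s) :=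
    fun l hl => hFS l (mem_range_succ_iff.mp hl) s
  have hE : exp (-I * (Real.pi : ℂ) * s) = exp (-(2 * I * ((Real.pi : ℂ) * s / 2))) := by
    congr 1; ring
  have hexp : exp (I * (Real.pi : ℂ) * r * s / 2) = exp (I * ((Real.pi : ℂ) * s / 2)) ^ r := by
    rw [← exp_nat_mul]; congr 1; ring
  have hcos := congrArg (· ^ r) (exp_I_mul_mul_one_add_exp_neg ((Real.pi : ℂ) * s / 2))
  have hsin := congrArg (· ^ r) (exp_I_mul_mul_one_sub_exp_neg ((Real.pi : ℂ) * s / 2))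
  simp only [mul_pow] at hcos hsin
  constructor
  · have hcol : ∀ κ ∈ range (r + 1), ∑ l ∈ range (r + 1), 1 * u l κ s
        = (1 + exp (-I * (Real.pi : ℂ) * s)) ^ r * 1 :=
      fun κ hκ => by
        simp only [one_mul, mul_one]
        exact sum_eq_of_generating_polynomial_one (mem_range_succ_iff.mp hκ)
          (by simpa only [ofReal_one] using hgen κ (mem_range_succ_iff.mp hκ) s 1)
    have h := sum_mul_eq_of_linear_system hA hcol
    simp only [one_mul] at h
    rw [h, hexp, hE]
    linear_combination ((2 * (Real.pi : ℂ)) ^ (-(r : ℂ) * s) * GammaOmega r n d s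
      * ∑ l ∈ range (r + 1), B l (-s)) * hcos
  · have hcol : ∀ κ ∈ range (r + 1), ∑ l ∈ range (r + 1), (-1 : ℂ) ^ l * u l κ s
        = (1 - exp (-I * (Real.pi : ℂ) * s)) ^ r * (-1) ^ κ :=
      fun κ hκ => by
        rw [mul_comm]
        exact sum_neg_one_pow_mul_eq_of_generating_polynomial_neg_one (mem_range_succ_iff.mp hκ)
          (by simpa only [ofReal_neg, ofReal_one] using hgen κ (mem_range_succ_iff.mp hκ) s (-1))
    rw [sum_mul_eq_of_linear_system hA hcol, hexp, hE]
    linear_combination ((2 * (Real.pi : ℂ)) ^ (-(r : ℂ) * s) * GammaOmega r n d s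
      * ∑ l ∈ range (r + 1), (-1 : ℂ) ^ l * B l (-s)) * hsin

/-- diagonal functional equations for a Euclidean Jordan algebra of rank `r`,
dimension `n`, even Peirce constant `d`, with `d ≡ 0 (mod 4)` or (`d ≡ 2 (mod 4)` and `r`
odd). Assuming the Faraut–Satake system
`Z_ℓ(f̂, s − n/r) = (2π)^{−rs} e^{iπrs/2} Γ_Ω(s) ∑_κ u_{ℓ,κ}(s) Z_κ(f,−s)` with
`∑_ℓ y^ℓ u_{ℓ,κ}(s) = (y + e^{−iπs})^κ (y e^{−iπs} + 1)^{r−κ}`, the distributions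
`Z_± = ∑_ℓ (±1)^ℓ Z_ℓ` satisfy
`Z_+(f̂, s − n/r) = 2^r (2π)^{−rs} Γ_Ω(s) cos^r(πs/2) Z_+(f, −s)` and
`Z_−(f̂, s − n/r) = (2i)^r (2π)^{−rs} Γ_Ω(s) sin^r(πs/2) Z_−(f, −s)`.
Here `A ℓ = Z_ℓ(f̂, ·)` and `B ℓ = Z_ℓ(f, ·)` for a fixed Schwartz function `f`. -/
theorem stmt_8 (r n d : ℕ) (hr : 0 < r)
    (hd : d % 4 = 0 ∨ (d % 4 = 2 ∧ r % 2 = 1))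
    (u : ℕ → ℕ → ℂ → ℂ)
    (hgen : ∀ κ ≤ r, ∀ s : ℂ, ∀ y : ℝ,
      ∑ l ∈ range (r + 1), (y : ℂ) ^ l * u l κ s
        = ((y : ℂ) + exp (-I * (Real.pi : ℂ) * s)) ^ κ * ((y : ℂ) * exp (-I * (Real.pi : ℂ) * s) + 1) ^ (r - κ))
    (A B : ℕ → ℂ → ℂ)
    (hFS : ∀ l ≤ r, ∀ s : ℂ,
      A l (s - (n : ℂ) / (r : ℂ))
        = (2 * (Real.pi : ℂ)) ^ (-(r : ℂ) * s) * exp (I * (Real.pi : ℂ) * r * s / 2) * GammaOmega r n d s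
            * ∑ κ ∈ range (r + 1), u l κ s * B κ (-s))
    (s : ℂ) :
    (∑ l ∈ range (r + 1), A l (s - (n : ℂ) / (r : ℂ))
        = 2 ^ r * (2 * (Real.pi : ℂ)) ^ (-(r : ℂ) * s) * GammaOmega r n d s
            * cos ((Real.pi : ℂ) * s / 2) ^ r * ∑ l ∈ range (r + 1), B l (-s)) ∧
    (∑ l ∈ range (r + 1), (-1 : ℂ) ^ l * A l (s - (n : ℂ) / (r : ℂ))
        = (2 * I) ^ r * (2 * (Real.pi : ℂ)) ^ (-(r : ℂ) * s) * GammaOmega r n d s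
            * sin ((Real.pi : ℂ) * s / 2) ^ r * ∑ l ∈ range (r + 1), (-1 : ℂ) ^ l * B l (-s)) :=
  stmt_8_general r n d u hgen A B hFS s
end
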